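/- Let Γ be a groupoid and R a Γ-graded ring (not necessarily object unital) that is right gr-primitive. Let S be a faithful gr-simple Γ-graded right R-module and D := END_R(S). Then D is a Γ-graded division ring, S is naturally a Γ-graded left D-module, and the map φ: R → END_D(S) given by φ(r) = (x ↦ xr) is an injective gr-homomorphism of Γ-graded rings whose image is a gr-dense subring of END_D(S). -/

import Mathlib

set_option autoImplicit false

noncomputable section

universe u v w x y

/-- A groupoid structure on its set `Γ` of morphisms.  Objects are identified with
the identity morphisms: `src γ` and `tgt γ` are the source and target identities
(`d(γ)` and `r(γ)`), and `comp γ δ h` is the composite `γδ`, which is defined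
exactly when `src γ = tgt δ`. -/
structure Gpd (Γ : Type u) where
  src : Γ → Γ
  tgt : Γ → Γ
  inv : Γ → Γ
  comp : (γ δ : Γ) → src γ = tgt δ → Γ
  src_src : ∀ γ, src (src γ) = src γ
  tgt_src : ∀ γ, tgt (src γ) = src γ
  src_tgt : ∀ γ, src (tgt γ) = tgt γ
  tgt_tgt : ∀ γ, tgt (tgt γ) = tgt γ
  src_comp : ∀ γ δ (h : src γ = tgt δ), src (comp γ δ h) = src δ
  tgt_comp : ∀ γ δ (h : src γ = tgt δ), tgt (comp γ δ h) = tgt γ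
  comp_id : ∀ γ, comp γ (src γ) (tgt_src γ).symm = γ
  id_comp : ∀ γ, comp (tgt γ) γ (src_tgt γ) = γ
  comp_assoc : ∀ γ δ ε (h₁ : src γ = tgt δ) (h₂ : src δ = tgt ε),
    comp (comp γ δ h₁) ε ((src_comp γ δ h₁).trans h₂)
      = comp γ (comp δ ε h₂) (h₁.trans (tgt_comp δ ε h₂).symm)
  src_inv : ∀ γ, src (inv γ) = tgt γ
  tgt_inv : ∀ γ, tgt (inv γ) = src γ
  inv_inv : ∀ γ, inv (inv γ) = γ
  comp_inv : ∀ γ, comp γ (inv γ) (tgt_inv γ).symm = tgt γ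
  inv_comp : ∀ γ, comp (inv γ) γ (src_inv γ) = src γ

namespace Gpd

variable {Γ : Type u} (G : Gpd Γ)

/-- `e` is an object of the groupoid, i.e. an identity morphism. -/
def IsObj (e : Γ) : Prop := G.src e = e

open scoped Classical in
/-- Partial composition: `some (γδ)` when defined, `none` otherwise. -/
def mul? (γ δ : Γ) : Option Γ :=
  if h : G.src γ = G.tgt δ then some (G.comp γ δ h) else none

/-- The partial triple product `σ γ τ⁻¹`, `none` when undefined. -/
def conj? (σ γ τ : Γ) : Option Γ :=
  (G.mul? σ γ).bind fun η => G.mul? η (G.inv τ)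

end Gpd

/-- A `Γ`-graded ring structure on the (possibly non-unital) ring `R`, not assumed
to be object unital. -/
structure GRingNU {Γ : Type u} (G : Gpd Γ) (R : Type v) [NonUnitalRing R] where
  grade : Γ → AddSubgroup R
  grade_iSup : (⨆ γ : Γ, grade γ) = ⊤
  grade_indep : ∀ γ : Γ, grade γ ⊓ (⨆ (δ : Γ) (_ : δ ≠ γ), grade δ) = ⊥
  mul_mem : ∀ (γ δ : Γ) (h : G.src γ = G.tgt δ) (a b : R),
    a ∈ grade γ → b ∈ grade δ → a * b ∈ grade (G.comp γ δ h)
  mul_ne : ∀ (γ δ : Γ), G.src γ ≠ G.tgt δ → ∀ (a b : R),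
    a ∈ grade γ → b ∈ grade δ → a * b = 0

/-- A `Γ`-graded right module (not assumed unital) over the `Γ`-graded ring `RG`. -/
structure GModNU {Γ : Type u} {G : Gpd Γ} {R : Type v} [NonUnitalRing R]
    (RG : GRingNU G R) (M : Type w) [AddCommGroup M] where
  smul : M → R → M
  smul_add : ∀ (m : M) (a b : R), smul m (a + b) = smul m a + smul m b
  add_smul : ∀ (m n : M) (a : R), smul (m + n) a = smul m a + smul n a
  smul_mul : ∀ (m : M) (a b : R), smul m (a * b) = smul (smul m a) b
  grade : Γ → AddSubgroup M
  grade_iSup : (⨆ γ : Γ, grade γ) = ⊤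
  grade_indep : ∀ γ : Γ, grade γ ⊓ (⨆ (δ : Γ) (_ : δ ≠ γ), grade δ) = ⊥
  smul_mem : ∀ (σ τ : Γ) (h : G.src σ = G.tgt τ) (m : M) (a : R),
    m ∈ grade σ → a ∈ RG.grade τ → smul m a ∈ grade (G.comp σ τ h)
  smul_ne : ∀ (σ τ : Γ), G.src σ ≠ G.tgt τ → ∀ (m : M) (a : R),
    m ∈ grade σ → a ∈ RG.grade τ → smul m a = 0

namespace GModNU

variable {Γ : Type u} {G : Gpd Γ} {R : Type v} [NonUnitalRing R] {RG : GRingNU G R}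
  {M : Type w} [AddCommGroup M] (Mod : GModNU RG M)

/-- `shiftGrade σ γ` is the homogeneous component `M_{σγ}` (zero when undefined). -/
def shiftGrade (σ γ : Γ) : AddSubgroup M := (G.mul? σ γ).elim ⊥ Mod.grade

/-- `N` is a graded submodule of `M`. -/
def IsGradedSub (N : AddSubgroup M) : Prop :=
  (∀ m ∈ N, ∀ a : R, Mod.smul m a ∈ N) ∧ N ≤ ⨆ γ : Γ, (Mod.grade γ ⊓ N)

/-- `M` is gr-simple: `MR ≠ 0` and its only graded submodules are `0` and `M`. -/
def IsGrSimple : Prop :=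
  (∃ (m : M) (a : R), Mod.smul m a ≠ 0) ∧
    ∀ N : AddSubgroup M, Mod.IsGradedSub N → N = ⊥ ∨ N = ⊤

/-- `M` is a faithful `R`-module. -/
def IsFaithful : Prop := ∀ a : R, (∀ m : M, Mod.smul m a = 0) → a = 0

/-- The submodule `M(e) = ⊕_{r(γ) = e} M_γ`. -/
def eComp (e : Γ) : AddSubgroup M := ⨆ (γ : Γ) (_ : G.tgt γ = e), Mod.grade γ

/-- `M` is `Γ₀`-artinian. -/
def IsGamma0Artinian : Prop :=
  ∀ e : Γ, G.IsObj e → ∀ f : ℕ → AddSubgroup M,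
    (∀ n, Mod.IsGradedSub (f n) ∧ f n ≤ Mod.eComp e) →
    (∀ n, f (n + 1) ≤ f n) → ∃ n, ∀ k, n ≤ k → f k = f n

/-- `HomGrade γ` is the homogeneous component `HOM_R(M,M)_γ` of the graded
endomorphism ring `D = END_R(M)`. -/
def HomGrade (γ : Γ) : Set (M →+ M) :=
  {g | (∀ (m : M) (a : R), g (Mod.smul m a) = Mod.smul (g m) a) ∧
       ∀ (σ : Γ) (m : M), m ∈ Mod.grade σ → g m ∈ Mod.shiftGrade γ σ}

/-- The underlying additive subgroup of `D = END_R(M) = ⊕_γ HOM_R(M,M)_γ`. -/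
def EndR : AddSubgroup (M →+ M) := AddSubgroup.closure (⋃ γ : Γ, Mod.HomGrade γ)

/-- Right multiplication `φ(r) = (x ↦ xr)`. -/
def rmul (r : R) : M →+ M :=
  AddMonoidHom.mk' (fun m => Mod.smul m r) (fun m n => Mod.add_smul m n r)

/-- The homogeneous component of degree `γ` of `END_D(M)`, where `D = END_R(M)`
acts on `M` on the left:  additive endomorphisms commuting with all of `D` which
map `M_σ` into `M_{σγ}` for all `σ`. -/
def DEndGrade (γ : Γ) : Set (M →+ M) :=
  {t | (∀ (δ : Γ) (g : M →+ M), g ∈ Mod.HomGrade δ → ∀ m : M, t (g m) = g (t m)) ∧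
       ∀ (σ : Γ) (m : M), m ∈ Mod.grade σ → t m ∈ Mod.shiftGrade σ γ}

/-- The tuple `u` of homogeneous elements (of degrees `γs`) is pseudo-linearly
independent over `D = END_R(M)`: the only family `(a_i)` with `a_i ∈ D 1_{r(γs i)}`
and `∑ a_i u_i = 0` is the zero family. -/
def PLIoverD {n : ℕ} (γs : Fin n → Γ) (u : Fin n → M) : Prop :=
  (∀ i, u i ∈ Mod.grade (γs i)) ∧
  ∀ a : Fin n → (M →+ M),
    (∀ i, a i ∈ Mod.EndR ∧
      ∀ (σ : Γ) (m : M), m ∈ Mod.grade σ → G.tgt σ ≠ G.tgt (γs i) → a i m = 0) →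
    (∑ i, a i (u i)) = 0 → ∀ i, a i = 0

end GModNU

namespace GRingNU

variable {Γ : Type u} {G : Gpd Γ} {R : Type v} [NonUnitalRing R] (RG : GRingNU G R)

/-- The (right) regular graded module `R_R`. -/
def regular : GModNU RG R where
  smul := fun m a => m * a
  smul_add := fun m a b => mul_add m a b
  add_smul := fun m n a => add_mul m n a
  smul_mul := fun m a b => (mul_assoc m a b).symm
  grade := RG.grade
  grade_iSup := RG.grade_iSup
  grade_indep := RG.grade_indep
  smul_mem := RG.mul_mem
  smul_ne := RG.mul_ne

/-- `I` is a graded (two-sided) ideal of `R`. -/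
def IsGradedIdeal (I : AddSubgroup R) : Prop :=
  (∀ a ∈ I, ∀ r : R, a * r ∈ I ∧ r * a ∈ I) ∧ I ≤ ⨆ γ : Γ, (RG.grade γ ⊓ I)

/-- `R` is a gr-simple ring: `R² ≠ 0` and the only graded ideals are `0` and `R`. -/
def IsGrSimpleRing : Prop :=
  (∃ a b : R, a * b ≠ 0) ∧ ∀ I : AddSubgroup R, RG.IsGradedIdeal I → I = ⊥ ∨ I = ⊤

/-- `R` is right `Γ₀`-artinian. -/
def IsRightGamma0Artinian : Prop := RG.regular.IsGamma0Artinian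

end GRingNU

/-- A bundled `Γ`-graded right module (not assumed unital) over `RG`. -/
structure BModNU.{u', v', w'} {Γ : Type u'} {G : Gpd Γ} {R : Type v'} [NonUnitalRing R]
    (RG : GRingNU G R) where
  carrier : Type w'
  [acg : AddCommGroup carrier]
  str : GModNU RG carrier

attribute [instance] BModNU.acg

/-- `R` is right gr-primitive: there is a faithful gr-simple graded right
`R`-module. -/
def GRingNU.IsRightGrPrimitive.{u', v', w'} {Γ : Type u'} {G : Gpd Γ} {R : Type v'}
    [NonUnitalRing R] (RG : GRingNU G R) : Prop :=
  ∃ S : BModNU.{u', v', w'} RG, S.str.IsGrSimple ∧ S.str.IsFaithful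

end

/-!
Homogeneous components are the projections of an internal direct sum, and an additive map that
shifts degrees along a partial injection of `Γ` (multiplication by a homogeneous element on either
side, a homogeneous endomorphism) commutes with them. Hence kernels and images of homogeneous
endomorphisms and the images `ann(u) w` of annihilators of homogeneous tuples are graded
submodules, and gr-simplicity applies to them: `M = M(e)` for a single object `e`, a nonzero
homogeneous `g ∈ END_R(M)` is bijective with inverse of degree `γ⁻¹`, and `ann(u) w` is `0` or `M`.

Density is Jacobson's induction. If `ann(u₁, …, uₙ) ⊆ ann(w)` and `ann(u₁, …, uₙ₋₁) uₙ = M`, then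
`uₙ r ↦ w r` is a well-defined homogeneous `g ∈ END_R(M)` and one passes to `w - g uₙ`; otherwise
`uₙ` can be dropped. Pseudo-linear independence rules out `ann(uᵢ, i ≠ j) uⱼ = 0`, so each `vⱼ`
is `uⱼ rⱼ` with `uᵢ rⱼ = 0` for `i ≠ j`, and `r = ∑ rⱼ` works.
-/
namespace DirectSum.IsInternal

variable {ι X : Type*} [DecidableEq ι] [AddCommGroup X] {A : ι → AddSubgroup X}

theorem of_iSup_eq_top_of_inf_eq_bot (hsup : ⨆ i, A i = ⊤)
    (hind : ∀ i, A i ⊓ (⨆ (j) (_ : j ≠ i), A j) = ⊥) : IsInternal A := by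
  have h : IsInternal fun i => (A i).toIntSubmodule := by
    refine isInternal_submodule_of_iSupIndep_of_iSup_eq_top ?_ ?_
    · exact (iSupIndep_map_orderIso_iff AddSubgroup.toIntSubmodule).mpr
        fun i => disjoint_iff.mpr (hind i)
    · rw [← AddSubgroup.toIntSubmodule.map_iSup, hsup]; rfl
  exact h

theorem addMonoidHom_ext (h : IsInternal A) {Y : Type*} [AddCommGroup Y] {f g : X →+ Y}
    (hfg : ∀ i, ∀ x ∈ A i, f x = g x) : f = g := by
  let := h.chooseDecomposition
  ext x
  induction x using Decomposition.inductionOn A with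
  | zero => simp
  | homogeneous x => exact hfg _ x x.2
  | add x y hx hy => simp [hx, hy]

noncomputable def proj (h : IsInternal A) (i : ι) : X →+ X :=
  letI := h.chooseDecomposition
  (A i).subtype.comp ((DFinsupp.evalAddMonoidHom i).comp (decomposeAddEquiv A).toAddMonoidHom)

variable (h : IsInternal A)

theorem proj_mem (i : ι) (x : X) : h.proj i x ∈ A i :=
  letI := h.chooseDecomposition
  (decompose A x i).2

theorem proj_of_mem_same {i : ι} {x : X} (hx : x ∈ A i) : h.proj i x = x := by
  let := h.chooseDecomposition
  exact decompose_of_mem_same A hx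

theorem proj_of_mem_ne {i j : ι} {x : X} (hx : x ∈ A i) (hij : i ≠ j) : h.proj j x = 0 := by
  let := h.chooseDecomposition
  exact decompose_of_mem_ne A hx hij

theorem mem_iSup_inf_of_proj_mem {N : AddSubgroup X} {x : X} (hx : ∀ i, h.proj i x ∈ N) :
    x ∈ ⨆ i, A i ⊓ N := by
  classical
  let := h.chooseDecomposition
  rw [← sum_support_decompose A x]
  exact sum_mem fun i _ => AddSubgroup.mem_iSup_of_mem i ⟨(decompose A x i).2, hx i⟩

theorem mem_of_proj_mem {N : AddSubgroup X} {x : X} (hx : ∀ i, h.proj i x ∈ N) : x ∈ N :=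
  SetLike.le_def.mp (iSup_le fun _ => inf_le_right) (h.mem_iSup_inf_of_proj_mem hx)

section Shift

variable {κ Y : Type*} [DecidableEq κ] [AddCommGroup Y] {B : κ → AddSubgroup Y}
  (hB : IsInternal B) {f : X →+ Y} {p : ι → Option κ}
  (hp : ∀ i j k, p i = some k → p j = some k → i = j)
  (hf : ∀ i, ∀ x ∈ A i, f x ∈ (p i).elim ⊥ B)
include hf

omit [DecidableEq ι] in
theorem proj_map_of_mem_of_ne {j : ι} {k : κ} (hjk : p j ≠ some k) {y : X} (hy : y ∈ A j) :
    hB.proj k (f y) = 0 := by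
  have hfy := hf j y hy
  cases hpj : p j with
  | none =>
    rw [hpj] at hfy
    rw [AddSubgroup.mem_bot.mp hfy, map_zero]
  | some k' =>
    rw [hpj] at hfy
    exact hB.proj_of_mem_ne hfy fun hk' => hjk (hk' ▸ hpj)

include h hB

theorem proj_map_of_forall_ne {k : κ} (hk : ∀ i, p i ≠ some k) (x : X) :
    hB.proj k (f x) = 0 := by
  suffices (hB.proj k).comp f = 0 from DFunLike.congr_fun this x
  exact h.addMonoidHom_ext fun j y hy => hB.proj_map_of_mem_of_ne hf (hk j) hy

include hp

theorem proj_map {i : ι} {k : κ} (hik : p i = some k) (x : X) :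
    hB.proj k (f x) = f (h.proj i x) := by
  suffices (hB.proj k).comp f = f.comp (h.proj i) from DFunLike.congr_fun this x
  refine h.addMonoidHom_ext fun j y hy => ?_
  simp only [AddMonoidHom.comp_apply]
  by_cases hji : j = i
  · subst hji
    have hfy := hf j y hy
    rw [hik] at hfy
    rw [h.proj_of_mem_same hy, hB.proj_of_mem_same hfy]
  · rw [h.proj_of_mem_ne hy hji, map_zero]
    exact hB.proj_map_of_mem_of_ne hf (fun hk => hji (hp j i k hk hik)) hy

theorem map_proj_eq_zero {x : X} (hx : f x = 0) (i : ι) : f (h.proj i x) = 0 := by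
  cases hpi : p i with
  | none =>
    have := hf i _ (h.proj_mem i x)
    rw [hpi] at this
    exact AddSubgroup.mem_bot.mp this
  | some k => rw [← h.proj_map hB hp hf hpi, hx, map_zero]

theorem proj_mem_map {N : AddSubgroup X} (hN : ∀ x ∈ N, ∀ i, h.proj i x ∈ N) {y : Y}
    (hy : y ∈ N.map f) (k : κ) : hB.proj k y ∈ N.map f := by
  obtain ⟨x, hx, rfl⟩ := hy
  by_cases hk : ∃ i, p i = some k
  · obtain ⟨i, hik⟩ := hk
    rw [h.proj_map hB hp hf hik]
    exact ⟨_, hN x hx i, rfl⟩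
  · simp only [not_exists] at hk
    rw [h.proj_map_of_forall_ne hB hf hk]
    exact zero_mem _

end Shift

end DirectSum.IsInternal

namespace Gpd

variable {Γ : Type*} (G : Gpd Γ) {γ δ ε ρ : Γ}

theorem mul?_eq_some_iff : G.mul? γ δ = some ρ ↔ ∃ h, G.comp γ δ h = ρ := by
  unfold mul?
  split_ifs with h <;> simp [h]

theorem mul?_eq_none_iff : G.mul? γ δ = none ↔ G.src γ ≠ G.tgt δ := by
  unfold mul?
  split_ifs with h <;> simp [h]

theorem mul?_of (h : G.src γ = G.tgt δ) : G.mul? γ δ = some (G.comp γ δ h) :=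
  G.mul?_eq_some_iff.2 ⟨h, rfl⟩

theorem tgt_eq_of_mul?_eq_some (h : G.mul? γ δ = some ρ) : G.tgt ρ = G.tgt γ := by
  obtain ⟨hd, rfl⟩ := G.mul?_eq_some_iff.1 h
  exact G.tgt_comp γ δ hd

theorem id_comp_of_eq (hε : ε = G.tgt δ) (h : G.src ε = G.tgt δ) : G.comp ε δ h = δ := by
  subst hε
  exact G.id_comp δ

theorem comp_id_of_eq (hε : ε = G.src γ) (h : G.src γ = G.tgt ε) : G.comp γ ε h = γ := by
  subst hε
  exact G.comp_id γ

theorem inv_comp_cancel_left (h : G.src γ = G.tgt δ) :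
    G.mul? (G.inv γ) (G.comp γ δ h) = some δ := by
  refine G.mul?_eq_some_iff.2 ⟨by rw [G.src_inv, G.tgt_comp], ?_⟩
  rw [← G.comp_assoc _ _ _ (G.src_inv γ) h]
  exact G.id_comp_of_eq ((G.inv_comp γ).trans h) _

theorem comp_inv_cancel_left (h : G.src (G.inv γ) = G.tgt δ) :
    G.mul? γ (G.comp (G.inv γ) δ h) = some δ := by
  simpa only [G.inv_inv] using G.inv_comp_cancel_left h

theorem comp_inv_cancel_right (h : G.src γ = G.tgt δ) :
    G.mul? (G.comp γ δ h) (G.inv δ) = some γ := by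
  refine G.mul?_eq_some_iff.2 ⟨by rw [G.src_comp, G.tgt_inv], ?_⟩
  rw [G.comp_assoc _ _ _ h (G.tgt_inv δ).symm]
  exact G.comp_id_of_eq ((G.comp_inv δ).trans h.symm) _

theorem inv_comp_cancel_right (h : G.src γ = G.tgt (G.inv δ)) :
    G.mul? (G.comp γ (G.inv δ) h) δ = some γ := by
  simpa only [G.inv_inv] using G.comp_inv_cancel_right h

theorem mul?_right_injective (h₁ : G.mul? γ δ = some ρ) (h₂ : G.mul? γ ε = some ρ) : δ = ε := by
  obtain ⟨hd₁, rfl⟩ := G.mul?_eq_some_iff.1 h₁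
  obtain ⟨hd₂, e⟩ := G.mul?_eq_some_iff.1 h₂
  have := G.inv_comp_cancel_left hd₂
  rw [e, G.inv_comp_cancel_left hd₁] at this
  exact Option.some_injective _ this

theorem mul?_left_injective (h₁ : G.mul? δ γ = some ρ) (h₂ : G.mul? ε γ = some ρ) : δ = ε := by
  obtain ⟨hd₁, rfl⟩ := G.mul?_eq_some_iff.1 h₁
  obtain ⟨hd₂, e⟩ := G.mul?_eq_some_iff.1 h₂
  have := G.comp_inv_cancel_right hd₂
  rw [e, G.comp_inv_cancel_right hd₁] at this
  exact Option.some_injective _ this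

end Gpd

section Graded

open scoped Classical
open DirectSum

theorem GRingNU.isInternal {Γ : Type*} {G : Gpd Γ} {R : Type*} [NonUnitalRing R]
    (RG : GRingNU G R) : IsInternal RG.grade :=
  .of_iSup_eq_top_of_inf_eq_bot RG.grade_iSup RG.grade_indep

namespace GModNU

variable {Γ : Type*} {G : Gpd Γ} {R : Type*} [NonUnitalRing R] {RG : GRingNU G R}
  {M : Type*} [AddCommGroup M] (Mod : GModNU RG M)

theorem isInternal : IsInternal Mod.grade :=
  .of_iSup_eq_top_of_inf_eq_bot Mod.grade_iSup Mod.grade_indep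

def lmul (m : M) : R →+ M :=
  AddMonoidHom.mk' (Mod.smul m) (Mod.smul_add m)

@[simp]
theorem lmul_apply (m : M) (a : R) : Mod.lmul m a = Mod.smul m a := rfl

@[simp]
theorem rmul_apply (a : R) (m : M) : Mod.rmul a m = Mod.smul m a := rfl

theorem zero_smul (a : R) : Mod.smul 0 a = 0 := map_zero (Mod.rmul a)

theorem smul_zero (m : M) : Mod.smul m 0 = 0 := map_zero (Mod.lmul m)

theorem sub_smul (m n : M) (a : R) : Mod.smul (m - n) a = Mod.smul m a - Mod.smul n a :=
  map_sub (Mod.rmul a) m n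

theorem smul_sub (m : M) (a b : R) : Mod.smul m (a - b) = Mod.smul m a - Mod.smul m b :=
  map_sub (Mod.lmul m) a b

theorem smul_sum {ι : Type*} (m : M) (s : Finset ι) (a : ι → R) :
    Mod.smul m (∑ i ∈ s, a i) = ∑ i ∈ s, Mod.smul m (a i) :=
  map_sum (Mod.lmul m) a s

variable {Mod}

theorem shiftGrade_of_mul?_eq_some {σ τ ρ : Γ} (h : G.mul? σ τ = some ρ) :
    Mod.shiftGrade σ τ = Mod.grade ρ := by
  rw [shiftGrade, h]
  rfl

theorem shiftGrade_of_mul?_eq_none {σ τ : Γ} (h : G.mul? σ τ = none) :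
    Mod.shiftGrade σ τ = ⊥ := by
  rw [shiftGrade, h]
  rfl

theorem smul_mem_shiftGrade {σ τ : Γ} {m : M} {a : R} (hm : m ∈ Mod.grade σ)
    (ha : a ∈ RG.grade τ) : Mod.smul m a ∈ Mod.shiftGrade σ τ := by
  by_cases h : G.src σ = G.tgt τ
  · rw [shiftGrade_of_mul?_eq_some (G.mul?_of h)]
    exact Mod.smul_mem σ τ h m a hm ha
  · rw [shiftGrade_of_mul?_eq_none (G.mul?_eq_none_iff.2 h)]
    exact AddSubgroup.mem_bot.2 (Mod.smul_ne σ τ h m a hm ha)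

theorem rmul_injective (hf : Mod.IsFaithful) : Function.Injective Mod.rmul := fun r s h =>
  sub_eq_zero.1 <| hf _ fun m => by
    rw [Mod.smul_sub, ← rmul_apply, ← rmul_apply, h, sub_self]

theorem rmul_mem_dEndGrade {γ : Γ} {r : R} (hr : r ∈ RG.grade γ) :
    Mod.rmul r ∈ Mod.DEndGrade γ :=
  ⟨fun _ _ hg m => (hg.1 m r).symm, fun _ _ hm => smul_mem_shiftGrade hm hr⟩

theorem proj_smul_of_mem_left {σ τ ρ : Γ} {m : M} (hm : m ∈ Mod.grade σ)
    (h : G.mul? σ τ = some ρ) (a : R) :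
    Mod.isInternal.proj ρ (Mod.smul m a) = Mod.smul m (RG.isInternal.proj τ a) :=
  RG.isInternal.proj_map Mod.isInternal (f := Mod.lmul m) (fun _ _ _ => G.mul?_right_injective)
    (fun _ _ ha => smul_mem_shiftGrade hm ha) h a

theorem smul_proj_eq_zero_of_mem_left {σ : Γ} {m : M} (hm : m ∈ Mod.grade σ) {a : R}
    (h : Mod.smul m a = 0) (τ : Γ) : Mod.smul m (RG.isInternal.proj τ a) = 0 :=
  RG.isInternal.map_proj_eq_zero Mod.isInternal (f := Mod.lmul m)
    (fun _ _ _ => G.mul?_right_injective) (fun _ _ ha => smul_mem_shiftGrade hm ha) h τ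

theorem smul_proj_eq_zero_of_mem_right {τ : Γ} {a : R} (ha : a ∈ RG.grade τ) {m : M}
    (h : Mod.smul m a = 0) (σ : Γ) : Mod.smul (Mod.isInternal.proj σ m) a = 0 :=
  Mod.isInternal.map_proj_eq_zero Mod.isInternal (f := Mod.rmul a) (p := fun σ => G.mul? σ τ)
    (fun _ _ _ => G.mul?_left_injective) (fun _ _ hm => smul_mem_shiftGrade hm ha) h σ

theorem isGradedSub_of_proj_mem {N : AddSubgroup M} (hsmul : ∀ m ∈ N, ∀ a, Mod.smul m a ∈ N)
    (hproj : ∀ m ∈ N, ∀ σ, Mod.isInternal.proj σ m ∈ N) : Mod.IsGradedSub N :=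
  ⟨hsmul, fun _ hm => Mod.isInternal.mem_iSup_inf_of_proj_mem (hproj _ hm)⟩

section HomGrade

variable {γ : Γ} {g : M →+ M}

theorem proj_apply_of_mem_homGrade (hg : g ∈ Mod.HomGrade γ) {σ ρ : Γ}
    (h : G.mul? γ σ = some ρ) (m : M) :
    Mod.isInternal.proj ρ (g m) = g (Mod.isInternal.proj σ m) :=
  Mod.isInternal.proj_map Mod.isInternal (p := G.mul? γ) (fun _ _ _ => G.mul?_right_injective)
    hg.2 h m

theorem proj_apply_of_forall_ne (hg : g ∈ Mod.HomGrade γ) {ρ : Γ}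
    (h : ∀ σ, G.mul? γ σ ≠ some ρ) (m : M) : Mod.isInternal.proj ρ (g m) = 0 :=
  Mod.isInternal.proj_map_of_forall_ne Mod.isInternal (p := G.mul? γ) hg.2 h m

theorem isGradedSub_ker (hg : g ∈ Mod.HomGrade γ) : Mod.IsGradedSub g.ker :=
  isGradedSub_of_proj_mem
    (fun m hm a => by rw [AddMonoidHom.mem_ker, hg.1, AddMonoidHom.mem_ker.1 hm, Mod.zero_smul])
    fun _ hm => Mod.isInternal.map_proj_eq_zero Mod.isInternal (p := G.mul? γ)
      (fun _ _ _ => G.mul?_right_injective) hg.2 (AddMonoidHom.mem_ker.1 hm)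

theorem isGradedSub_range (hg : g ∈ Mod.HomGrade γ) : Mod.IsGradedSub g.range := by
  refine isGradedSub_of_proj_mem (fun _ ⟨m, hm⟩ a => ⟨Mod.smul m a, by rw [hg.1, hm]⟩) ?_
  rw [AddMonoidHom.range_eq_map]
  exact fun _ hm => Mod.isInternal.proj_mem_map Mod.isInternal (p := G.mul? γ)
    (fun _ _ _ => G.mul?_right_injective) hg.2 (fun _ _ _ => AddSubgroup.mem_top _) hm

theorem inverse_mem_homGrade (hg : g ∈ Mod.HomGrade γ) {h : M →+ M} (hgh : ∀ m, g (h m) = m)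
    (hhg : ∀ m, h (g m) = m) : h ∈ Mod.HomGrade (G.inv γ) := by
  have hinj : Function.Injective g := Function.LeftInverse.injective hhg
  refine ⟨fun m a => hinj (by rw [hgh, hg.1, hgh]), fun σ m hm => ?_⟩
  cases hd : G.mul? (G.inv γ) σ with
  | none =>
    have hσ : ∀ τ, G.mul? γ τ ≠ some σ := fun τ hτ => by
      rw [G.mul?_eq_none_iff, G.src_inv, ← G.tgt_eq_of_mul?_eq_some hτ] at hd
      exact hd rfl
    rw [shiftGrade_of_mul?_eq_none hd, ← Mod.isInternal.proj_of_mem_same hm, ← hgh m,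
      proj_apply_of_forall_ne hg hσ, map_zero]
    exact zero_mem _
  | some ρ =>
    obtain ⟨hd', rfl⟩ := G.mul?_eq_some_iff.1 hd
    have hproj : Mod.isInternal.proj _ (h m) = h m := hinj <| by
      rw [← proj_apply_of_mem_homGrade hg (G.comp_inv_cancel_left hd'), hgh,
        Mod.isInternal.proj_of_mem_same hm]
    rw [shiftGrade_of_mul?_eq_some hd, ← hproj]
    exact Mod.isInternal.proj_mem _ _

end HomGrade

section Annihilator

variable {ι : Type*}

variable (Mod) in
def annihilator (u : ι → M) : AddSubgroup R := ⨅ i, (Mod.lmul (u i)).ker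

theorem mem_annihilator {u : ι → M} {r : R} :
    r ∈ Mod.annihilator u ↔ ∀ i, Mod.smul (u i) r = 0 := by
  simp [annihilator, AddSubgroup.mem_iInf]

theorem annihilator_eq_init_inf {n : ℕ} (u : Fin (n + 1) → M) :
    Mod.annihilator u = Mod.annihilator (Fin.init u) ⊓ (Mod.lmul (u (Fin.last n))).ker := by
  ext r
  simp [mem_annihilator, Fin.forall_fin_succ', Fin.init]

theorem mul_mem_annihilator {u : ι → M} {r : R} (hr : r ∈ Mod.annihilator u) (a : R) :
    r * a ∈ Mod.annihilator u :=
  Mod.mem_annihilator.2 fun i => by rw [Mod.smul_mul, Mod.mem_annihilator.1 hr i, Mod.zero_smul]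

variable {γs : ι → Γ} {u : ι → M}

theorem proj_mem_annihilator (hu : ∀ i, u i ∈ Mod.grade (γs i)) {r : R}
    (hr : r ∈ Mod.annihilator u) (τ : Γ) : RG.isInternal.proj τ r ∈ Mod.annihilator u :=
  Mod.mem_annihilator.2 fun i =>
    smul_proj_eq_zero_of_mem_left (hu i) (Mod.mem_annihilator.1 hr i) τ

theorem isGradedSub_map_annihilator (hu : ∀ i, u i ∈ Mod.grade (γs i)) {γ : Γ} {w : M}
    (hw : w ∈ Mod.grade γ) : Mod.IsGradedSub ((Mod.annihilator u).map (Mod.lmul w)) := by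
  refine isGradedSub_of_proj_mem (fun _ ⟨r, hr, hm⟩ a => ?_) fun _ hm =>
    RG.isInternal.proj_mem_map Mod.isInternal (p := G.mul? γ)
      (fun _ _ _ => G.mul?_right_injective) (fun _ _ ha => smul_mem_shiftGrade hw ha)
      (fun _ hr τ => proj_mem_annihilator hu hr τ) hm
  refine ⟨r * a, Mod.mul_mem_annihilator hr a, ?_⟩
  rw [← hm]
  exact Mod.smul_mul w r a

end Annihilator

theorem eq_zero_of_forall_smul_eq_zero (hs : Mod.IsGrSimple) {m : M}
    (hm : ∀ a, Mod.smul m a = 0) : m = 0 := by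
  let Z : AddSubgroup M := ⨅ a : R, (Mod.rmul a).ker
  have hZ : ∀ m, m ∈ Z ↔ ∀ a, Mod.smul m a = 0 := by simp [Z, AddSubgroup.mem_iInf]
  have hgr : Mod.IsGradedSub Z := by
    refine isGradedSub_of_proj_mem (fun m hm a => (hZ _).2 fun b => ?_)
      fun m hm σ => (hZ _).2 fun b => ?_
    · rw [← Mod.smul_mul]
      exact (hZ m).1 hm _
    · have : Mod.lmul (Mod.isInternal.proj σ m) = 0 := RG.isInternal.addMonoidHom_ext
        fun τ a ha => smul_proj_eq_zero_of_mem_right ha ((hZ m).1 hm a) σ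
      exact DFunLike.congr_fun this b
  rcases hs.2 Z hgr with hbot | htop
  · exact AddSubgroup.mem_bot.1 (hbot ▸ (hZ m).2 hm)
  · obtain ⟨m', a, h⟩ := hs.1
    exact absurd ((hZ m').1 (htop ▸ AddSubgroup.mem_top m') a) h

theorem grade_le_eComp {e σ : Γ} (hσ : G.tgt σ = e) : Mod.grade σ ≤ Mod.eComp e :=
  le_iSup₂ (f := fun σ (_ : G.tgt σ = e) => Mod.grade σ) σ hσ

theorem smul_mem_eComp {e : Γ} {m : M} (hm : m ∈ Mod.eComp e) (a : R) :
    Mod.smul m a ∈ Mod.eComp e := by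
  suffices h : Mod.eComp e ≤ (Mod.eComp e).comap (Mod.rmul a) from h hm
  refine iSup₂_le fun σ hσ m hm => ?_
  suffices h : (⊤ : AddSubgroup R) ≤ (Mod.eComp e).comap (Mod.lmul m) from
    h (AddSubgroup.mem_top a)
  rw [← RG.grade_iSup]
  refine iSup_le fun τ b hb => ?_
  have hmb := smul_mem_shiftGrade hm hb
  cases h : G.mul? σ τ with
  | none =>
    rw [shiftGrade_of_mul?_eq_none h] at hmb
    simp only [AddSubgroup.mem_comap, lmul_apply, AddSubgroup.mem_bot.1 hmb, zero_mem]
  | some ρ =>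
    rw [shiftGrade_of_mul?_eq_some h] at hmb
    exact grade_le_eComp ((G.tgt_eq_of_mul?_eq_some h).trans hσ) hmb

theorem isGradedSub_eComp (e : Γ) : Mod.IsGradedSub (Mod.eComp e) :=
  ⟨fun _ hm => smul_mem_eComp hm, iSup₂_le fun σ hσ _ hm =>
    AddSubgroup.mem_iSup_of_mem σ ⟨hm, grade_le_eComp hσ hm⟩⟩

theorem eq_zero_of_eComp_eq_top {e σ : Γ} (htop : Mod.eComp e = ⊤) {m : M}
    (hm : m ∈ Mod.grade σ) (hσ : G.tgt σ ≠ e) : m = 0 := by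
  have hle : Mod.eComp e ≤ ⨆ (δ : Γ) (_ : δ ≠ σ), Mod.grade δ :=
    iSup₂_le fun δ hδ => le_iSup₂ (f := fun δ (_ : δ ≠ σ) => Mod.grade δ) δ
      fun h => hσ (h ▸ hδ)
  have hmem : m ∈ Mod.grade σ ⊓ ⨆ (δ : Γ) (_ : δ ≠ σ), Mod.grade δ :=
    ⟨hm, hle (htop ▸ AddSubgroup.mem_top m)⟩
  rwa [Mod.grade_indep σ, AddSubgroup.mem_bot] at hmem

theorem exists_isObj_eComp_eq_top (hs : Mod.IsGrSimple) : ∃ e, G.IsObj e ∧ Mod.eComp e = ⊤ := by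
  obtain ⟨γ, hγ⟩ : ∃ γ, Mod.grade γ ≠ ⊥ := by
    by_contra! h
    obtain ⟨m, a, hma⟩ := hs.1
    have htop : (⊤ : AddSubgroup M) = ⊥ := by rw [← Mod.grade_iSup, iSup_eq_bot.2 h]
    exact hma (AddSubgroup.mem_bot.1 (htop ▸ AddSubgroup.mem_top _))
  refine ⟨G.tgt γ, G.src_tgt γ, (hs.2 _ (isGradedSub_eComp _)).resolve_left fun hbot => hγ ?_⟩
  exact eq_bot_iff.2 (hbot ▸ grade_le_eComp rfl)

theorem id_mem_homGrade {e : Γ} (he : G.IsObj e) (htop : Mod.eComp e = ⊤) :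
    AddMonoidHom.id M ∈ Mod.HomGrade e := by
  refine ⟨fun _ _ => rfl, fun σ m hm => ?_⟩
  by_cases hσ : G.tgt σ = e
  · rw [shiftGrade_of_mul?_eq_some (G.mul?_of (he.trans hσ.symm)), G.id_comp_of_eq hσ.symm]
    exact hm
  · rw [eq_zero_of_eComp_eq_top htop hm hσ]
    exact zero_mem _

theorem id_ne_zero (hs : Mod.IsGrSimple) : AddMonoidHom.id M ≠ 0 := fun h => by
  obtain ⟨m, a, hma⟩ := hs.1
  exact hma (DFunLike.congr_fun h _)


section Division

variable {γ : Γ} {g : M →+ M}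

theorem bijective_of_mem_homGrade (hs : Mod.IsGrSimple) (hg : g ∈ Mod.HomGrade γ)
    (hne : g ≠ 0) : Function.Bijective g := by
  refine ⟨(AddMonoidHom.ker_eq_bot_iff g).1 ?_, AddMonoidHom.range_eq_top.1 ?_⟩
  · refine (hs.2 _ (isGradedSub_ker hg)).resolve_right fun htop => hne ?_
    ext m
    exact AddMonoidHom.mem_ker.1 (htop ▸ AddSubgroup.mem_top m)
  · refine (hs.2 _ (isGradedSub_range hg)).resolve_left fun hbot => hne ?_
    ext m
    exact AddSubgroup.mem_bot.1 (hbot ▸ AddMonoidHom.mem_range.2 ⟨m, rfl⟩)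

theorem src_eq_and_tgt_eq_of_mem_homGrade {e : Γ} (htop : Mod.eComp e = ⊤)
    (hg : g ∈ Mod.HomGrade γ) (hne : g ≠ 0) : G.src γ = e ∧ G.tgt γ = e := by
  obtain ⟨σ, m, hm, hgm⟩ : ∃ σ, ∃ m ∈ Mod.grade σ, g m ≠ 0 := by
    by_contra! h
    exact hne (Mod.isInternal.addMonoidHom_ext h)
  have hσ : G.tgt σ = e := by
    by_contra hσ
    exact hgm (by rw [eq_zero_of_eComp_eq_top htop hm hσ, map_zero])
  have hgm' := hg.2 σ m hm
  cases hd : G.mul? γ σ with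
  | none =>
    rw [shiftGrade_of_mul?_eq_none hd] at hgm'
    exact absurd (AddSubgroup.mem_bot.1 hgm') hgm
  | some ρ =>
    rw [shiftGrade_of_mul?_eq_some hd] at hgm'
    obtain ⟨hd', -⟩ := G.mul?_eq_some_iff.1 hd
    refine ⟨hd'.trans hσ, (G.tgt_eq_of_mul?_eq_some hd).symm.trans ?_⟩
    by_contra hρ
    exact hgm (eq_zero_of_eComp_eq_top htop hgm' hρ)

theorem exists_inverse_of_mem_homGrade (hs : Mod.IsGrSimple) {e : Γ} (htop : Mod.eComp e = ⊤)
    (hg : g ∈ Mod.HomGrade γ) (hne : g ≠ 0) :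
    ∃ h : M →+ M, h ∈ Mod.HomGrade (G.inv γ) ∧
      (∀ (σ : Γ) (m : M), m ∈ Mod.grade σ →
        (G.tgt σ = G.src γ → h (g m) = m) ∧ (G.tgt σ ≠ G.src γ → h (g m) = 0)) ∧
      (∀ (σ : Γ) (m : M), m ∈ Mod.grade σ →
        (G.tgt σ = G.tgt γ → g (h m) = m) ∧ (G.tgt σ ≠ G.tgt γ → g (h m) = 0)) := by
  let E := AddEquiv.ofBijective g (bijective_of_mem_homGrade hs hg hne)
  have hgh : ∀ m, g (E.symm m) = m := E.apply_symm_apply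
  have hhg : ∀ m, E.symm (g m) = m := E.symm_apply_apply
  obtain ⟨hsrc, htgt⟩ := src_eq_and_tgt_eq_of_mem_homGrade htop hg hne
  refine ⟨E.symm.toAddMonoidHom, inverse_mem_homGrade hg hgh hhg,
    fun σ m hm => ⟨fun _ => hhg m, fun hσ => ?_⟩, fun σ m hm => ⟨fun _ => hgh m, fun hσ => ?_⟩⟩
  · rw [eq_zero_of_eComp_eq_top htop hm (hsrc ▸ hσ), map_zero, map_zero]
  · rw [eq_zero_of_eComp_eq_top htop hm (htgt ▸ hσ), map_zero, map_zero]

end Division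

section Density

variable (Mod) in
/-- `D 1_e`, the coefficients allowed in `PLIoverD`. -/
def endRAt (e : Γ) : AddSubgroup (M →+ M) where
  carrier := {a | a ∈ Mod.EndR ∧ ∀ σ m, m ∈ Mod.grade σ → G.tgt σ ≠ e → a m = 0}
  add_mem' ha hb := ⟨add_mem ha.1 hb.1, fun σ m hm hσ => by
    rw [AddMonoidHom.add_apply, ha.2 σ m hm hσ, hb.2 σ m hm hσ, add_zero]⟩
  zero_mem' := ⟨zero_mem _, fun _ _ _ _ => rfl⟩
  neg_mem' ha := ⟨neg_mem ha.1, fun σ m hm hσ => by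
    rw [AddMonoidHom.neg_apply, ha.2 σ m hm hσ, neg_zero]⟩

theorem mem_endRAt_of_mem_homGrade {γ : Γ} {g : M →+ M} (hg : g ∈ Mod.HomGrade γ) :
    g ∈ Mod.endRAt (G.src γ) := by
  refine ⟨AddSubgroup.subset_closure (Set.mem_iUnion.2 ⟨γ, hg⟩), fun σ m hm hσ => ?_⟩
  have := hg.2 σ m hm
  rw [shiftGrade_of_mul?_eq_none (G.mul?_eq_none_iff.2 hσ.symm)] at this
  exact AddSubgroup.mem_bot.1 this

variable (Mod) in
def pseudoSpan {n : ℕ} (γs : Fin n → Γ) (u : Fin n → M) : Set M :=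
  {w | ∃ a : Fin n → (M →+ M), (∀ i, a i ∈ Mod.endRAt (G.tgt (γs i))) ∧ ∑ i, a i (u i) = w}

theorem mem_pseudoSpan_of_sub_mem {n : ℕ} {γs : Fin (n + 1) → Γ} {u : Fin (n + 1) → M}
    {b : M →+ M} (hb : b ∈ Mod.endRAt (G.tgt (γs (Fin.last n)))) {w : M}
    (hw : w - b (u (Fin.last n)) ∈ Mod.pseudoSpan (Fin.init γs) (Fin.init u)) :
    w ∈ Mod.pseudoSpan γs u := by
  obtain ⟨a, ha, hsum⟩ := hw
  refine ⟨Fin.snoc a b, Fin.lastCases (by simpa using hb) fun i => by simpa [Fin.init] using ha i,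
    ?_⟩
  simp only [Fin.sum_univ_castSucc, Fin.snoc_castSucc, Fin.snoc_last]
  rw [show ∑ i : Fin n, a i (u i.castSucc) = _ from hsum, sub_add_cancel]

theorem exists_hom_of_map_eq_top {A : AddSubgroup R} (hA : ∀ r ∈ A, ∀ a, r * a ∈ A) {u w : M}
    (htop : A.map (Mod.lmul u) = ⊤) (hker : A ⊓ (Mod.lmul u).ker ≤ (Mod.lmul w).ker) :
    ∃ g : M →+ M, (∀ m a, g (Mod.smul m a) = Mod.smul (g m) a) ∧
      ∀ r ∈ A, g (Mod.smul u r) = Mod.smul w r := by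
  let φ := (Mod.lmul u).comp A.subtype
  have hφ : Function.Surjective φ := fun m => by
    obtain ⟨r, hr, rfl⟩ := htop ▸ AddSubgroup.mem_top m
    exact ⟨⟨r, hr⟩, rfl⟩
  have hle : φ.ker ≤ ((Mod.lmul w).comp A.subtype).ker := fun r hr => hker ⟨r.2, hr⟩
  let g := φ.liftOfSurjective hφ ⟨_, hle⟩
  have hg : ∀ r (hr : r ∈ A), g (Mod.smul u r) = Mod.smul w r := fun r hr =>
    φ.liftOfRightInverse_comp_apply _ _ ⟨_, hle⟩ ⟨r, hr⟩
  refine ⟨g, fun m a => ?_, hg⟩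
  obtain ⟨⟨r, hr⟩, rfl⟩ := hφ m
  simp only [φ, AddMonoidHom.comp_apply, AddSubgroup.coe_subtype, lmul_apply]
  rw [← Mod.smul_mul, hg _ (hA r hr a), hg r hr, Mod.smul_mul]

theorem mem_homGrade_of_map_eq_top {ι : Type*} {γs : ι → Γ} {u : ι → M}
    (hu : ∀ i, u i ∈ Mod.grade (γs i)) {γl γ : Γ} {ul w : M} (hul : ul ∈ Mod.grade γl)
    (hw : w ∈ Mod.grade γ) (hsrc : G.src γ = G.tgt (G.inv γl))
    (htop : (Mod.annihilator u).map (Mod.lmul ul) = ⊤) {g : M →+ M}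
    (hlin : ∀ m a, g (Mod.smul m a) = Mod.smul (g m) a)
    (hg : ∀ r ∈ Mod.annihilator u, g (Mod.smul ul r) = Mod.smul w r) :
    g ∈ Mod.HomGrade (G.comp γ (G.inv γl) hsrc) := by
  refine ⟨hlin, fun σ m hm => ?_⟩
  obtain ⟨r, hr, rfl⟩ := htop ▸ AddSubgroup.mem_top m
  cases hd : G.mul? (G.inv γl) σ with
  | none =>
    have hσ : ∀ τ, G.mul? γl τ ≠ some σ := fun τ hτ => by
      rw [G.mul?_eq_none_iff, G.src_inv, ← G.tgt_eq_of_mul?_eq_some hτ] at hd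
      exact hd rfl
    rw [← Mod.isInternal.proj_of_mem_same hm,
      RG.isInternal.proj_map_of_forall_ne Mod.isInternal (f := Mod.lmul ul) (p := G.mul? γl)
        (fun _ _ ha => smul_mem_shiftGrade hul ha) hσ, map_zero]
    exact zero_mem _
  | some τ =>
    obtain ⟨hd', rfl⟩ := G.mul?_eq_some_iff.1 hd
    -- the component of `r` of degree `γl⁻¹ σ` still maps `ul` to `ul r`
    have hr' :
        Mod.smul ul (RG.isInternal.proj (G.comp (G.inv γl) σ hd') r) = Mod.smul ul r := by
      rw [← proj_smul_of_mem_left hul (G.comp_inv_cancel_left hd'),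
        Mod.isInternal.proj_of_mem_same (x := Mod.smul ul r) hm]
    have hσ : G.src (G.comp γ (G.inv γl) hsrc) = G.tgt σ := by
      rw [G.src_comp, G.src_inv, ← hd', G.src_inv]
    rw [lmul_apply, ← hr', hg _ (proj_mem_annihilator hu hr _),
      shiftGrade_of_mul?_eq_some (G.mul?_of hσ), G.comp_assoc γ (G.inv γl) σ hsrc hd']
    have := smul_mem_shiftGrade hw (RG.isInternal.proj_mem (G.comp (G.inv γl) σ hd') r)
    rwa [shiftGrade_of_mul?_eq_some (G.mul?_of _)] at this

theorem annihilator_le_of_src_ne {ι : Type*} {γs : ι → Γ} {u : ι → M}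
    (hu : ∀ i, u i ∈ Mod.grade (γs i)) {γl γ : Γ} {ul w : M} (hul : ul ∈ Mod.grade γl)
    (hw : w ∈ Mod.grade γ) (hsrc : G.src γ ≠ G.src γl)
    (hann : Mod.annihilator u ⊓ (Mod.lmul ul).ker ≤ (Mod.lmul w).ker) :
    Mod.annihilator u ≤ (Mod.lmul w).ker := by
  refine fun r hr => RG.isInternal.mem_of_proj_mem fun τ => ?_
  have hτ := RG.isInternal.proj_mem τ r
  by_cases hd : G.src γ = G.tgt τ
  · exact hann ⟨proj_mem_annihilator hu hr τ, AddMonoidHom.mem_ker.2 <|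
      Mod.smul_ne γl τ (fun h => hsrc (hd.trans h.symm)) ul _ hul hτ⟩
  · exact AddMonoidHom.mem_ker.2 (Mod.smul_ne γ τ hd w _ hw hτ)

theorem mem_pseudoSpan_of_annihilator_le (hs : Mod.IsGrSimple) {n : ℕ} {γs : Fin n → Γ}
    {u : Fin n → M} (hu : ∀ i, u i ∈ Mod.grade (γs i)) {γ : Γ} {w : M} (hw : w ∈ Mod.grade γ)
    (hann : Mod.annihilator u ≤ (Mod.lmul w).ker) : w ∈ Mod.pseudoSpan γs u := by
  induction n generalizing γ w with
  | zero =>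
    obtain rfl : w = 0 := eq_zero_of_forall_smul_eq_zero hs fun a =>
      hann (Mod.mem_annihilator.2 fun i => i.elim0)
    exact ⟨0, fun i => i.elim0, by simp⟩
  | succ n ih =>
    set γl := γs (Fin.last n)
    set ul := u (Fin.last n)
    have hu' : ∀ i, Fin.init u i ∈ Mod.grade (Fin.init γs i) := fun i => hu _
    have hul : ul ∈ Mod.grade γl := hu _
    rw [annihilator_eq_init_inf] at hann
    by_cases hsrc : G.src γ = G.src γl
    · rcases hs.2 _ (isGradedSub_map_annihilator hu' hul) with hbot | htop
      · refine mem_pseudoSpan_of_sub_mem (zero_mem _) ?_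
        simpa using ih hu' hw fun r hr => hann ⟨hr,
          AddSubgroup.mem_bot.1 (hbot ▸ AddSubgroup.mem_map_of_mem (Mod.lmul ul) hr)⟩
      · obtain ⟨g, hlin, hg⟩ :=
          exists_hom_of_map_eq_top (fun _ hr a => Mod.mul_mem_annihilator hr a) htop hann
        have hsrc' : G.src γ = G.tgt (G.inv γl) := hsrc.trans (G.tgt_inv γl).symm
        have hgrade := mem_homGrade_of_map_eq_top hu' hul hw hsrc' htop hlin hg
        have hgul : g ul ∈ Mod.grade γ := by
          have := hgrade.2 γl ul hul
          rwa [shiftGrade_of_mul?_eq_some (G.inv_comp_cancel_right hsrc')] at this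
        refine mem_pseudoSpan_of_sub_mem ?_ (ih hu' (sub_mem hw hgul) fun r hr => ?_)
        · simpa only [G.src_comp, G.src_inv] using mem_endRAt_of_mem_homGrade hgrade
        · rw [AddMonoidHom.mem_ker, lmul_apply, Mod.sub_smul, ← hlin, hg r hr, sub_self]
    · refine mem_pseudoSpan_of_sub_mem (zero_mem _) ?_
      simpa using ih hu' hw (annihilator_le_of_src_ne hu' hul hw hsrc hann)

theorem map_annihilator_update_eq_top (hs : Mod.IsGrSimple) {e : Γ} (he : G.IsObj e)
    (htop : Mod.eComp e = ⊤) {n : ℕ} {γs : Fin n → Γ} {u : Fin n → M}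
    (hpli : Mod.PLIoverD γs u) {j : Fin n} (hj : G.tgt (γs j) = e) :
    (Mod.annihilator (Function.update u j 0)).map (Mod.lmul (u j)) = ⊤ := by
  have hu' : ∀ i, Function.update u j 0 i ∈ Mod.grade (γs i) := fun i => by
    rcases eq_or_ne i j with rfl | hij
    · simp
    · simpa [hij] using hpli.1 i
  refine (hs.2 _ (isGradedSub_map_annihilator hu' (hpli.1 j))).resolve_left fun hbot => ?_
  obtain ⟨a, ha, hsum⟩ := mem_pseudoSpan_of_annihilator_le hs hu' (hpli.1 j) fun r hr =>
    AddSubgroup.mem_bot.1 (hbot ▸ AddSubgroup.mem_map_of_mem _ hr)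
  have hid : AddMonoidHom.id M ∈ Mod.endRAt (G.tgt (γs j)) := by
    have := mem_endRAt_of_mem_homGrade (id_mem_homGrade he htop)
    rwa [show G.src e = e from he, ← hj] at this
  -- `u j = ∑_{i ≠ j} aᵢ uᵢ` is a nontrivial pseudo-linear relation, with coefficient `-1_e`
  let b := Function.update a j (-AddMonoidHom.id M)
  have hb : ∀ i, b i ∈ Mod.endRAt (G.tgt (γs i)) := fun i => by
    rcases eq_or_ne i j with rfl | hij
    · simpa [b] using neg_mem hid
    · simpa [b, hij] using ha i
  have hbsum : ∑ i, b i (u i) = 0 := by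
    calc ∑ i, b i (u i)
        = ∑ i, (a i (Function.update u j 0 i) - (Pi.single j (u j) : Fin n → M) i) :=
          Finset.sum_congr rfl fun i _ => by rcases eq_or_ne i j with rfl | hij <;> simp [b, *]
      _ = 0 := by rw [Finset.sum_sub_distrib, hsum, Fintype.sum_pi_single', sub_self]
  have hbj := hpli.2 b hb hbsum j
  exact id_ne_zero hs (neg_eq_zero.1 (by simpa [b] using hbj))

theorem exists_smul_eq_of_PLIoverD (hs : Mod.IsGrSimple) {n : ℕ} {γs δs : Fin n → Γ}
    {u v : Fin n → M} (hpli : Mod.PLIoverD γs u)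
    (hv : ∀ i, v i ∈ Mod.grade (δs i) ∧ G.tgt (δs i) = G.tgt (γs i)) :
    ∃ r : R, ∀ i, Mod.smul (u i) r = v i := by
  obtain ⟨e, he, htop⟩ := exists_isObj_eComp_eq_top hs
  have hsingle : ∀ j, ∃ r : R, ∀ i, Mod.smul (u i) r = (Pi.single j (v j) : Fin n → M) i := by
    intro j
    by_cases hj : G.tgt (γs j) = e
    · obtain ⟨r, hr, hrv⟩ :=
        map_annihilator_update_eq_top hs he htop hpli hj ▸ AddSubgroup.mem_top (v j)
      refine ⟨r, fun i => ?_⟩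
      rcases eq_or_ne i j with rfl | hij
      · simpa using hrv
      · simpa [hij] using Mod.mem_annihilator.1 hr i
    · have hvj : v j = 0 := eq_zero_of_eComp_eq_top htop (hv j).1 ((hv j).2 ▸ hj)
      exact ⟨0, fun i => by simp [hvj, Mod.smul_zero]⟩
  choose r hr using hsingle
  exact ⟨∑ j, r j, fun i => by simp only [Mod.smul_sum, hr, Fintype.sum_pi_single]⟩

end Density

end GModNU

end Graded

universe u v w x y

/-- graded Jacobson–Chevalley density theorem.
Let `R` be a right gr-primitive `Γ`-graded ring (not necessarily object unital),
`S` a faithful gr-simple graded right `R`-module, and `D := END_R(S)`.  Then `D`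
is a `Γ`-graded division ring, and the map `φ : R → END_D(S)`, `φ(r) = (x ↦ xr)`,
is an injective graded multiplicative map (into the `D`-linear endomorphisms of
`S` as a graded left `D`-module) whose image is a gr-dense subring of
`END_D(S)`. -/
theorem graded_density_theorem
    {Γ : Type u} (G : Gpd Γ) {R : Type v} [NonUnitalRing R] (RG : GRingNU G R)
    {M : Type w} [AddCommGroup M] (Mod : GModNU RG M)
    (hsimple : Mod.IsGrSimple) (hfaithful : Mod.IsFaithful) :
    -- `D = END_R(S)` is a `Γ`-graded division ring:
    ((∃ (γ : Γ) (g : M →+ M), g ∈ Mod.HomGrade γ ∧ g ≠ 0) ∧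
     (∀ (γ : Γ) (g : M →+ M), g ∈ Mod.HomGrade γ → g ≠ 0 →
       ∃ h : M →+ M, h ∈ Mod.HomGrade (G.inv γ) ∧
         (∀ (σ : Γ) (m : M), m ∈ Mod.grade σ →
           (G.tgt σ = G.src γ → h (g m) = m) ∧ (G.tgt σ ≠ G.src γ → h (g m) = 0)) ∧
         (∀ (σ : Γ) (m : M), m ∈ Mod.grade σ →
           (G.tgt σ = G.tgt γ → g (h m) = m) ∧ (G.tgt σ ≠ G.tgt γ → g (h m) = 0)))) ∧
    -- `φ` is injective:
    Function.Injective (fun r : R => Mod.rmul r) ∧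
    -- `φ` is multiplicative (a gr-homomorphism of rings into `END_D(S)`,
    -- endomorphisms of the left `D`-module `S` being written on the right):
    (∀ (r s : R) (m : M), Mod.rmul (r * s) m = Mod.rmul s (Mod.rmul r m)) ∧
    -- `φ` is graded, with values in `END_D(S)`:
    (∀ (γ : Γ) (r : R), r ∈ RG.grade γ → Mod.rmul r ∈ Mod.DEndGrade γ) ∧
    -- the image of `φ` is a gr-dense subring of `END_D(S)`:
    (∀ (n : ℕ) (γs δs : Fin n → Γ) (u v : Fin n → M),
      Mod.PLIoverD γs u →
      (∀ i, v i ∈ Mod.grade (δs i) ∧ G.tgt (δs i) = G.tgt (γs i)) →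
      ∃ r : R, ∀ i, Mod.smul (u i) r = v i) := by
  obtain ⟨e, he, htop⟩ := Mod.exists_isObj_eComp_eq_top hsimple
  exact ⟨⟨⟨e, AddMonoidHom.id M, Mod.id_mem_homGrade he htop, Mod.id_ne_zero hsimple⟩,
      fun _ _ hg hne => Mod.exists_inverse_of_mem_homGrade hsimple htop hg hne⟩,
    Mod.rmul_injective hfaithful, fun r s m => Mod.smul_mul m r s,
    fun _ _ hr => Mod.rmul_mem_dEndGrade hr,
    fun _ _ _ _ _ hpli hv => Mod.exists_smul_eq_of_PLIoverD hsimple hpli hv⟩
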